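/- Let A = diag(A₁, A₂) be a (1,2)-symmetric nonnegative tensor with irreducible blocks, and assume min over rank-(2,2,2) approximations of ‖A − (X,X,Z)·F‖² is strictly less than min over rank-(2,2,2) approximations of ‖A₁ − (X,X,W)·F‖² + ‖A₂‖² (and the symmetric condition with A₁, A₂ interchanged), and that the best rank-(2,2,2) approximation (U,U,W) with core F is unique. Then U = [u₁ 0; 0 u₂] is block diagonal, and every 3-slice F(:,:,ν) of the core tensor F = A·(U,U,W) is a diagonal 2×2 matrix, with F(1,1,:) = A₁·(u₁,u₁,W) and F(2,2,:) = A₂·(u₂,u₂,W). -/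

import Mathlib

open scoped BigOperators
open Sum

noncomputable section

/-- Multilinear (Tucker) tensor–matrix product: `(U,V,W)·A`. -/
def tmul {ι₁ ι₂ ι₃ κ₁ κ₂ κ₃ : Type*} [Fintype ι₁] [Fintype ι₂] [Fintype ι₃]
    (U : κ₁ → ι₁ → ℝ) (V : κ₂ → ι₂ → ℝ) (W : κ₃ → ι₃ → ℝ)
    (A : ι₁ → ι₂ → ι₃ → ℝ) : κ₁ → κ₂ → κ₃ → ℝ :=
  fun i j k => ∑ a, ∑ b, ∑ c, U i a * V j b * W k c * A a b c

/-- Squared Frobenius norm of a 3-tensor. -/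
def fro2 {ι₁ ι₂ ι₃ : Type*} [Fintype ι₁] [Fintype ι₂] [Fintype ι₃]
    (A : ι₁ → ι₂ → ι₃ → ℝ) : ℝ := ∑ i, ∑ j, ∑ k, (A i j k) ^ 2

/-- Frobenius norm of a 3-tensor. -/
def fro {ι₁ ι₂ ι₃ : Type*} [Fintype ι₁] [Fintype ι₂] [Fintype ι₃]
    (A : ι₁ → ι₂ → ι₃ → ℝ) : ℝ := Real.sqrt (fro2 A)

/-- Trilinear form `A·(x,y,z)`. -/
def tri {ι₁ ι₂ ι₃ : Type*} [Fintype ι₁] [Fintype ι₂] [Fintype ι₃]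
    (A : ι₁ → ι₂ → ι₃ → ℝ) (x : ι₁ → ℝ) (y : ι₂ → ℝ) (z : ι₃ → ℝ) : ℝ :=
  ∑ i, ∑ j, ∑ k, A i j k * x i * y j * z k

/-- Unit vector (Euclidean norm 1). -/
def unitVec {ι : Type*} [Fintype ι] (x : ι → ℝ) : Prop := ∑ i, x i ^ 2 = 1

/-- A matrix (given as a family of rows) has orthonormal columns. -/
def orthCols {ι κ : Type*} [Fintype ι] [DecidableEq κ] (X : ι → κ → ℝ) : Prop :=
  ∀ a b, (∑ i, X i a * X i b) = if a = b then (1 : ℝ) else 0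

/-- A (1,2)-symmetric tensor is (1,2)-reducible if there are a nonempty proper
index set `I` and a nonempty set `K` of 3-mode indices with
`B i j k = B j i k = 0` for `i ∈ I`, `j ∉ I`, `k ∈ K`. -/
def Reducible12 {σ τ : Type*} (B : σ → σ → τ → ℝ) : Prop :=
  ∃ (I : Set σ) (K : Set τ), I.Nonempty ∧ I ≠ Set.univ ∧ K.Nonempty ∧
    ∀ i ∈ I, ∀ j ∉ I, ∀ k ∈ K, B i j k = 0 ∧ B j i k = 0

/-- 3-reducibility: `B i j k = 0` for all `i, j ∈ I`, `k ∈ K`. -/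
def Reducible3 {σ τ : Type*} (B : σ → σ → τ → ℝ) : Prop :=
  ∃ (I : Set σ) (K : Set τ), I.Nonempty ∧ I ≠ Set.univ ∧ K.Nonempty ∧
    ∀ i ∈ I, ∀ j ∈ I, ∀ k ∈ K, B i j k = 0

/-- Irreducible: neither (1,2)-reducible nor 3-reducible. -/
def IrreducibleTensor {σ τ : Type*} (B : σ → σ → τ → ℝ) : Prop :=
  ¬ Reducible12 B ∧ ¬ Reducible3 B

/-!
Flipping the sign of the second row block of `U` leaves the residual unchanged, since `A` has no
off-diagonal blocks; by uniqueness the approximation `(U,U,W)·F` is unchanged too, so its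
off-diagonal blocks vanish. Write `U₁, U₂` for the row blocks of `U` and `G_k` for the core
contracted with the `k`-th row of `W`, so that the blocks of the approximation are `U_a G_k U_bᵀ`.
If `U₁ᵀU₁` were invertible, `U₁ G_k U₂ᵀ = 0` would force `G_k U₂ᵀ = 0`: the approximation then
lives on the first block, and the polar decomposition `U₁ = X R` exhibits it as a rank-(2,2,2)
approximation of `A₁`, so the residual is at least the best one for `A₁` plus `‖A₂‖²`, against
the hypothesis. Hence both Gram matrices `U₁ᵀU₁` and `U₂ᵀU₂` are singular; as they add up to the
identity, unit kernel vectors `w` of the first and `v` of the second are orthogonal, and rotating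
`U` by `[v w]` makes it block diagonal.
-/

open Matrix

section Tucker

variable {ι ν κ ρ : Type*} [Fintype ι] [Fintype ν] [Fintype κ] [Fintype ρ]

def tuckerErr (A : ι → ι → ν → ℝ) (X : ι → κ → ℝ) (Z : ν → ρ → ℝ)
    (H : κ → κ → ρ → ℝ) : ℝ :=
  fro2 fun p q k => A p q k - tmul X X Z H p q k

variable (κ ρ) [DecidableEq κ] [DecidableEq ρ] in
def bestTuckerErr (A : ι → ι → ν → ℝ) : ℝ :=
  sInf {r | ∃ (X : ι → κ → ℝ) (Z : ν → ρ → ℝ) (H : κ → κ → ρ → ℝ),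
    orthCols X ∧ orthCols Z ∧ r = tuckerErr A X Z H}

variable [DecidableEq κ] [DecidableEq ρ] {A : ι → ι → ν → ℝ}

lemma bestTuckerErr_le {X : ι → κ → ℝ} {Z : ν → ρ → ℝ} (H : κ → κ → ρ → ℝ)
    (hX : orthCols X) (hZ : orthCols Z) : bestTuckerErr κ ρ A ≤ tuckerErr A X Z H :=
  csInf_le ⟨0, by rintro _ ⟨X, Z, H, -, -, rfl⟩; unfold tuckerErr fro2; positivity⟩
    ⟨X, Z, H, hX, hZ, rfl⟩

lemma le_bestTuckerErr {U : ι → κ → ℝ} {W : ν → ρ → ℝ} {F : κ → κ → ρ → ℝ}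
    (hU : orthCols U) (hW : orthCols W)
    (hmin : ∀ (X : ι → κ → ℝ) (Z : ν → ρ → ℝ) (H : κ → κ → ρ → ℝ),
      orthCols X → orthCols Z → tuckerErr A U W F ≤ tuckerErr A X Z H) :
    tuckerErr A U W F ≤ bestTuckerErr κ ρ A :=
  le_csInf ⟨_, U, W, F, hU, hW, rfl⟩ fun _ ⟨X, Z, H, hX, hZ, hr⟩ => hr ▸ hmin X Z H hX hZ

end Tucker

lemma orthCols_iff_transpose_mul_self {ι κ : Type*} [Fintype ι] [DecidableEq κ]
    {X : Matrix ι κ ℝ} : orthCols X ↔ Xᵀ * X = 1 := by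
  simp [orthCols, ← Matrix.ext_iff, mul_apply, one_apply]

lemma orthCols_mul_rows {ι κ : Type*} [Fintype ι] [DecidableEq κ] {U : ι → κ → ℝ}
    (hU : orthCols U) {s : ι → ℝ} (hs : ∀ p, s p ^ 2 = 1) :
    orthCols fun p a => s p * U p a := by
  intro a b
  rw [← hU a b]
  exact Finset.sum_congr rfl fun p _ => by linear_combination U p a * U p b * hs p

open scoped MatrixOrder in
lemma exists_orthCols_eq_mul_of_isUnit {σ κ : Type*} [Fintype σ] [Fintype κ] [DecidableEq κ]
    {U : Matrix σ κ ℝ} (hU : IsUnit (Uᵀ * U)) :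
    ∃ (X : Matrix σ κ ℝ) (R : Matrix κ κ ℝ), orthCols X ∧ U = X * R := by
  have hS : 0 ≤ Uᵀ * U := by
    simpa [conjTranspose_eq_transpose_of_trivial] using (posSemidef_conjTranspose_mul_self U).nonneg
  set R := CFC.sqrt (Uᵀ * U)
  have hRR : R * R = Uᵀ * U := CFC.sqrt_mul_sqrt_self _ hS
  have hRt : Rᵀ = R := by
    have := (CFC.sqrt_nonneg (Uᵀ * U)).isSelfAdjoint
    rwa [IsSelfAdjoint, star_eq_conjTranspose, conjTranspose_eq_transpose_of_trivial] at this
  have hR : IsUnit R.det := (isUnit_iff_isUnit_det R).1 ((CFC.isUnit_sqrt_iff _ hS).2 hU)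
  refine ⟨U * R⁻¹, R, orthCols_iff_transpose_mul_self.2 ?_,
    (nonsing_inv_mul_cancel_right _ _ hR).symm⟩
  rw [transpose_mul, transpose_nonsing_inv, hRt, Matrix.mul_assoc, ← Matrix.mul_assoc Uᵀ, ← hRR,
    ← Matrix.mul_assoc, ← Matrix.mul_assoc, nonsing_inv_mul _ hR, Matrix.one_mul,
    mul_nonsing_inv _ hR]

lemma exists_dotProduct_self_eq_one_mulVec_eq_zero {κ : Type*} [Fintype κ] [DecidableEq κ]
    {M : Matrix κ κ ℝ} (h : M.det = 0) : ∃ v, v ⬝ᵥ v = 1 ∧ M *ᵥ v = 0 := by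
  obtain ⟨v, hv, hMv⟩ := exists_mulVec_eq_zero_iff.2 h
  have hpos : 0 < v ⬝ᵥ v :=
    lt_of_le_of_ne (Finset.sum_nonneg fun i _ => mul_self_nonneg (v i))
      (Ne.symm (dotProduct_self_eq_zero.not.2 hv))
  refine ⟨(√(v ⬝ᵥ v))⁻¹ • v, ?_, by rw [mulVec_smul, hMv, smul_zero]⟩
  rw [smul_dotProduct, dotProduct_smul, smul_eq_mul, smul_eq_mul, ← mul_assoc, ← mul_inv,
    Real.mul_self_sqrt hpos.le, inv_mul_cancel₀ hpos.ne']

lemma eq_zero_of_mul_eq_zero_of_isUnit_transpose_mul_self {m n l R : Type*} [Fintype m]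
    [Fintype n] [DecidableEq n] [CommRing R] {A : Matrix m n R} {B : Matrix n l R}
    (hA : IsUnit (Aᵀ * A)) (h : A * B = 0) : B = 0 := by
  have hdet := (isUnit_iff_isUnit_det _).1 hA
  calc B = (Aᵀ * A)⁻¹ * Aᵀ * (A * B) := by
        rw [← Matrix.mul_assoc _ A, Matrix.mul_assoc _ Aᵀ, nonsing_inv_mul _ hdet, Matrix.one_mul]
    _ = 0 := by rw [h, Matrix.mul_zero]

section Tmul

variable {ι₁ ι₂ ι₃ μ₁ μ₂ μ₃ : Type*} [Fintype ι₁] [Fintype ι₂] [Fintype ι₃]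

lemma tmul_tmul {κ₁ κ₂ κ₃ : Type*} [Fintype κ₁] [Fintype κ₂] [Fintype κ₃]
    (X : Matrix μ₁ κ₁ ℝ) (Y : Matrix μ₂ κ₂ ℝ) (Z : Matrix μ₃ κ₃ ℝ)
    (R : Matrix κ₁ ι₁ ℝ) (S : Matrix κ₂ ι₂ ℝ) (T : Matrix κ₃ ι₃ ℝ) (F : ι₁ → ι₂ → ι₃ → ℝ) :
    tmul X Y Z (tmul R S T F)
      = tmul (X * R : Matrix _ _ ℝ) (Y * S : Matrix _ _ ℝ) (Z * T : Matrix _ _ ℝ) F := by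
  ext i j k
  simp only [tmul, mul_apply, Finset.sum_mul, Finset.mul_sum, ← Fintype.sum_prod_type']
  exact Fintype.sum_equiv
    ⟨fun x => (x.2.2.2.1, x.2.2.2.2.1, x.2.2.2.2.2, x.2.2.1, x.2.1, x.1),
      fun y => (y.2.2.2.2.2, y.2.2.2.2.1, y.2.2.2.1, y.1, y.2.1, y.2.2.1),
      fun _ => rfl, fun _ => rfl⟩ _ _ fun _ => by dsimp only [Equiv.coe_fn_mk]; ring

lemma tmul_mul_rows (s : μ₁ → ℝ) (t : μ₂ → ℝ) (U : μ₁ → ι₁ → ℝ) (V : μ₂ → ι₂ → ℝ)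
    (W : μ₃ → ι₃ → ℝ) (F : ι₁ → ι₂ → ι₃ → ℝ) (p : μ₁) (q : μ₂) (k : μ₃) :
    tmul (fun p a => s p * U p a) (fun q b => t q * V q b) W F p q k
      = s p * t q * tmul U V W F p q k := by
  simp only [tmul, Finset.mul_sum]
  exact Finset.sum_congr rfl fun _ _ => Finset.sum_congr rfl fun _ _ =>
    Finset.sum_congr rfl fun _ _ => by ring

def coreSlice {κ₁ κ₂ : Type*} (W : μ₃ → ι₃ → ℝ) (F : κ₁ → κ₂ → ι₃ → ℝ) (k : μ₃) :
    Matrix κ₁ κ₂ ℝ :=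
  of fun a b => ∑ c, W k c * F a b c

lemma tmul_apply_eq_mul_coreSlice (U : Matrix μ₁ ι₁ ℝ) (V : Matrix μ₂ ι₂ ℝ) (W : μ₃ → ι₃ → ℝ)
    (F : ι₁ → ι₂ → ι₃ → ℝ) (i : μ₁) (j : μ₂) (k : μ₃) :
    tmul U V W F i j k = (U * coreSlice W F k * Vᵀ) i j := by
  simp only [tmul, coreSlice, mul_apply, of_apply, transpose_apply, Finset.sum_mul,
    Finset.mul_sum]
  rw [Finset.sum_comm]
  exact Finset.sum_congr rfl fun b _ => Finset.sum_congr rfl fun a _ =>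
    Finset.sum_congr rfl fun c _ => by ring

end Tmul

lemma tmul_inr_inr_eq_zero_of_isUnit {σ τ ν κ ρ : Type*} [Fintype σ] [Fintype κ] [Fintype ρ]
    [DecidableEq κ] {U : σ ⊕ τ → κ → ℝ} {W : ν → ρ → ℝ} {F : κ → κ → ρ → ℝ}
    (h₁₂ : ∀ i j k, tmul U U W F (inl i) (inr j) k = 0)
    (hU₁ : IsUnit ((toRows₁ U)ᵀ * toRows₁ U)) (j j' : τ) (k : ν) :
    tmul U U W F (inr j) (inr j') k = 0 := by
  have hker : coreSlice W F k * (toRows₂ U)ᵀ = 0 := by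
    refine eq_zero_of_mul_eq_zero_of_isUnit_transpose_mul_self hU₁ (ext fun i j => ?_)
    rw [← Matrix.mul_assoc, ← tmul_apply_eq_mul_coreSlice]
    exact h₁₂ i j k
  change tmul (toRows₂ U) (toRows₂ U) W F j j' k = 0
  rw [tmul_apply_eq_mul_coreSlice, Matrix.mul_assoc, hker, Matrix.mul_zero, Matrix.zero_apply]

lemma exists_tmul_inl_inl_eq_of_isUnit {σ τ ν κ ρ : Type*} [Fintype σ] [Fintype κ] [Fintype ρ]
    [DecidableEq κ] [DecidableEq ρ] {U : σ ⊕ τ → κ → ℝ} (W : ν → ρ → ℝ) (F : κ → κ → ρ → ℝ)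
    (hU₁ : IsUnit ((toRows₁ U)ᵀ * toRows₁ U)) :
    ∃ (X : Matrix σ κ ℝ) (H : κ → κ → ρ → ℝ), orthCols X ∧
      ∀ i i' k, tmul U U W F (inl i) (inl i') k = tmul X X W H i i' k := by
  obtain ⟨X, R, hX, hUXR⟩ := exists_orthCols_eq_mul_of_isUnit hU₁
  refine ⟨X, tmul R R (1 : Matrix ρ ρ ℝ) F, hX, fun i i' k => ?_⟩
  have h := tmul_tmul X X W R R 1 F
  rw [Matrix.mul_one (m := ν) W, ← hUXR] at h
  exact congrFun₃ h.symm i i' k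

section BlockDiag

variable {σ τ ν κ ρ : Type*} [Fintype σ] [Fintype τ] [Fintype ν] [Fintype κ] [Fintype ρ]

def blockDiagTensor (A₁ : σ → σ → ν → ℝ) (A₂ : τ → τ → ν → ℝ) : σ ⊕ τ → σ ⊕ τ → ν → ℝ :=
  Sum.elim (fun i => Sum.elim (A₁ i) fun _ _ => 0) fun i => Sum.elim (fun _ _ => 0) (A₂ i)

def blockSign : σ ⊕ τ → ℝ := Sum.elim (fun _ => 1) fun _ => -1

variable {A₁ : σ → σ → ν → ℝ} {A₂ : τ → τ → ν → ℝ} {U : σ ⊕ τ → κ → ℝ} {W : ν → ρ → ℝ}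
  {F : κ → κ → ρ → ℝ}

lemma tuckerErr_blockSign :
    tuckerErr (blockDiagTensor A₁ A₂) (fun p a => blockSign p * U p a) W F
      = tuckerErr (blockDiagTensor A₁ A₂) U W F := by
  unfold tuckerErr fro2
  refine Finset.sum_congr rfl fun p _ => Finset.sum_congr rfl fun q _ =>
    Finset.sum_congr rfl fun k _ => ?_
  dsimp only
  rw [tmul_mul_rows]
  rcases p with i | i <;> rcases q with j | j <;> simp [blockSign, blockDiagTensor]

lemma tuckerErr_blockDiagTensor_swap :
    tuckerErr (blockDiagTensor A₂ A₁) (fun p => U p.swap) W F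
      = tuckerErr (blockDiagTensor A₁ A₂) U W F := by
  unfold tuckerErr fro2
  refine Fintype.sum_equiv (Equiv.sumComm τ σ) _ _ fun p =>
    Fintype.sum_equiv (Equiv.sumComm τ σ) _ _ fun q => ?_
  rcases p with i | i <;> rcases q with j | j <;> rfl

variable [DecidableEq κ] [DecidableEq ρ]

lemma tmul_inl_inr_eq_zero_of_unique (hU : orthCols U) (hW : orthCols W)
    (huniq : ∀ (X : σ ⊕ τ → κ → ℝ) (Z : ν → ρ → ℝ) (H : κ → κ → ρ → ℝ),
      orthCols X → orthCols Z →
      tuckerErr (blockDiagTensor A₁ A₂) X Z H = tuckerErr (blockDiagTensor A₁ A₂) U W F →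
      tmul X X Z H = tmul U U W F) :
    (∀ i j k, tmul U U W F (inl i) (inr j) k = 0) ∧
      ∀ i j k, tmul U U W F (inr j) (inl i) k = 0 := by
  have hflip : ∀ p q k, blockSign p * blockSign q * tmul U U W F p q k = tmul U U W F p q k := by
    intro p q k
    rw [← tmul_mul_rows]
    exact congrFun₃ (huniq _ W F (orthCols_mul_rows hU fun p => by rcases p <;> simp [blockSign])
      hW tuckerErr_blockSign) p q k
  constructor <;> intro i j k
  · have h := hflip (inl i) (inr j) k
    simp only [blockSign, Sum.elim_inl, Sum.elim_inr] at h
    linarith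
  · have h := hflip (inr j) (inl i) k
    simp only [blockSign, Sum.elim_inl, Sum.elim_inr] at h
    linarith

variable (A₁ A₂) in
lemma bestTuckerErr_add_fro2_le_of_isUnit_left (hW : orthCols W)
    (h₁₂ : ∀ i j k, tmul U U W F (inl i) (inr j) k = 0)
    (h₂₁ : ∀ i j k, tmul U U W F (inr j) (inl i) k = 0)
    (hU₁ : IsUnit ((toRows₁ U)ᵀ * toRows₁ U)) :
    bestTuckerErr κ ρ A₁ + fro2 A₂ ≤ tuckerErr (blockDiagTensor A₁ A₂) U W F := by
  obtain ⟨X, H, hX, h₁₁⟩ := exists_tmul_inl_inl_eq_of_isUnit W F hU₁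
  have h₂₂ := tmul_inr_inr_eq_zero_of_isUnit h₁₂ hU₁
  calc bestTuckerErr κ ρ A₁ + fro2 A₂ ≤ tuckerErr A₁ X W H + fro2 A₂ := by
        gcongr; exact bestTuckerErr_le _ hX hW
    _ = tuckerErr (blockDiagTensor A₁ A₂) U W F := by
        simp [tuckerErr, fro2, Fintype.sum_sum_type, blockDiagTensor, h₁₁, h₁₂, h₂₁, h₂₂]

variable (A₁ A₂) in
lemma bestTuckerErr_add_fro2_le_of_isUnit_right (hW : orthCols W)
    (h₁₂ : ∀ i j k, tmul U U W F (inl i) (inr j) k = 0)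
    (h₂₁ : ∀ i j k, tmul U U W F (inr j) (inl i) k = 0)
    (hU₂ : IsUnit ((toRows₂ U)ᵀ * toRows₂ U)) :
    bestTuckerErr κ ρ A₂ + fro2 A₁ ≤ tuckerErr (blockDiagTensor A₁ A₂) U W F := by
  rw [← tuckerErr_blockDiagTensor_swap]
  exact bestTuckerErr_add_fro2_le_of_isUnit_left A₂ A₁ hW (fun j i k => h₂₁ i j k)
    (fun j i k => h₁₂ i j k) hU₂

end BlockDiag

lemma exists_mem_orthogonalGroup_separating_blocks {σ τ : Type*} [Fintype σ] [Fintype τ]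
    {U : Matrix (σ ⊕ τ) (Fin 2) ℝ} (hU : orthCols U)
    (h₁ : ((toRows₁ U)ᵀ * toRows₁ U).det = 0) (h₂ : ((toRows₂ U)ᵀ * toRows₂ U).det = 0) :
    ∃ Q ∈ orthogonalGroup (Fin 2) ℝ,
      (∀ i, ∑ b, U (inl i) b * Q b 1 = 0) ∧ ∀ j, ∑ b, U (inr j) b * Q b 0 = 0 := by
  have hgram : (toRows₁ U)ᵀ * toRows₁ U + (toRows₂ U)ᵀ * toRows₂ U = 1 := by
    rw [← fromCols_mul_fromRows, ← transpose_fromRows, fromRows_toRows,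
      ← orthCols_iff_transpose_mul_self]
    exact hU
  set U₁ : Matrix σ (Fin 2) ℝ := toRows₁ U
  set U₂ : Matrix τ (Fin 2) ℝ := toRows₂ U
  obtain ⟨w, hw, hS₁w⟩ := exists_dotProduct_self_eq_one_mulVec_eq_zero h₁
  obtain ⟨v, hv, hS₂v⟩ := exists_dotProduct_self_eq_one_mulVec_eq_zero h₂
  have hU₁w : U₁ *ᵥ w = 0 := (SetLike.ext_iff.1 (ker_mulVecLin_transpose_mul_self U₁) w).1 hS₁w
  have hU₂v : U₂ *ᵥ v = 0 := (SetLike.ext_iff.1 (ker_mulVecLin_transpose_mul_self U₂) v).1 hS₂v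
  have hvw : v ⬝ᵥ w = 0 := by
    have hS₂w : (U₂ᵀ * U₂) *ᵥ w = w := by
      rw [← add_sub_cancel_left (U₁ᵀ * U₁) (U₂ᵀ * U₂), hgram, sub_mulVec, one_mulVec, hS₁w,
        sub_zero]
    rw [← hS₂w, dotProduct_mulVec, ← mulVec_transpose, transpose_mul, transpose_transpose, hS₂v,
      zero_dotProduct]
  refine ⟨(of ![v, w])ᵀ, ?_, fun i => congrFun hU₁w i, fun j => congrFun hU₂v j⟩
  rw [mem_orthogonalGroup_iff', transpose_transpose]
  ext a b
  simp only [dotProduct, Fin.sum_univ_two] at hv hw hvw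
  fin_cases a <;> fin_cases b <;> simp [mul_apply, Fin.sum_univ_two] <;> linarith

theorem stmt_9 {m₁ m₂ n : ℕ}
    (A₁ : Fin m₁ → Fin m₁ → Fin n → ℝ) (A₂ : Fin m₂ → Fin m₂ → Fin n → ℝ)
    (A : (Fin m₁ ⊕ Fin m₂) → (Fin m₁ ⊕ Fin m₂) → Fin n → ℝ)
    (hA : A = fun p q k => match p, q with
      | Sum.inl i, Sum.inl j => A₁ i j k
      | Sum.inr i, Sum.inr j => A₂ i j k
      | _, _ => 0)
    (hcond1 : sInf {r : ℝ | ∃ (X : (Fin m₁ ⊕ Fin m₂) → Fin 2 → ℝ)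
        (Z : Fin n → Fin 2 → ℝ) (H : Fin 2 → Fin 2 → Fin 2 → ℝ),
        orthCols X ∧ orthCols Z ∧
        r = fro2 (fun p q k => A p q k - tmul X X Z H p q k)}
      < sInf {r : ℝ | ∃ (X : Fin m₁ → Fin 2 → ℝ)
        (Z : Fin n → Fin 2 → ℝ) (H : Fin 2 → Fin 2 → Fin 2 → ℝ),
        orthCols X ∧ orthCols Z ∧
        r = fro2 (fun i j k => A₁ i j k - tmul X X Z H i j k)} + fro2 A₂)
    (hcond2 : sInf {r : ℝ | ∃ (X : (Fin m₁ ⊕ Fin m₂) → Fin 2 → ℝ)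
        (Z : Fin n → Fin 2 → ℝ) (H : Fin 2 → Fin 2 → Fin 2 → ℝ),
        orthCols X ∧ orthCols Z ∧
        r = fro2 (fun p q k => A p q k - tmul X X Z H p q k)}
      < sInf {r : ℝ | ∃ (X : Fin m₂ → Fin 2 → ℝ)
        (Z : Fin n → Fin 2 → ℝ) (H : Fin 2 → Fin 2 → Fin 2 → ℝ),
        orthCols X ∧ orthCols Z ∧
        r = fro2 (fun i j k => A₂ i j k - tmul X X Z H i j k)} + fro2 A₁)
    (U : (Fin m₁ ⊕ Fin m₂) → Fin 2 → ℝ) (W : Fin n → Fin 2 → ℝ)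
    (F : Fin 2 → Fin 2 → Fin 2 → ℝ)
    (hU : orthCols U) (hW : orthCols W)
    (hmin : ∀ (X : (Fin m₁ ⊕ Fin m₂) → Fin 2 → ℝ) (Z : Fin n → Fin 2 → ℝ)
      (H : Fin 2 → Fin 2 → Fin 2 → ℝ), orthCols X → orthCols Z →
      fro2 (fun p q k => A p q k - tmul U U W F p q k)
        ≤ fro2 (fun p q k => A p q k - tmul X X Z H p q k))
    (huniq : ∀ (X : (Fin m₁ ⊕ Fin m₂) → Fin 2 → ℝ) (Z : Fin n → Fin 2 → ℝ)
      (H : Fin 2 → Fin 2 → Fin 2 → ℝ), orthCols X → orthCols Z →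
      fro2 (fun p q k => A p q k - tmul X X Z H p q k)
        = fro2 (fun p q k => A p q k - tmul U U W F p q k)
      → tmul X X Z H = tmul U U W F) :
    ∃ Q ∈ Matrix.orthogonalGroup (Fin 2) ℝ,
      ∃ U' : (Fin m₁ ⊕ Fin m₂) → Fin 2 → ℝ,
        U' = (fun p a => ∑ b, U p b * Q b a) ∧
        (∀ i, U' (inl i) 1 = 0) ∧ (∀ j, U' (inr j) 0 = 0) ∧
        (∀ c, (∑ p, ∑ q, ∑ k, A p q k * U' p 0 * U' q 1 * W k c) = 0) ∧
        (∀ c, (∑ p, ∑ q, ∑ k, A p q k * U' p 1 * U' q 0 * W k c) = 0) ∧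
        (∀ c, (∑ p, ∑ q, ∑ k, A p q k * U' p 0 * U' q 0 * W k c)
          = ∑ i, ∑ j, ∑ k, A₁ i j k * U' (inl i) 0 * U' (inl j) 0 * W k c) ∧
        (∀ c, (∑ p, ∑ q, ∑ k, A p q k * U' p 1 * U' q 1 * W k c)
          = ∑ i, ∑ j, ∑ k, A₂ i j k * U' (inr i) 1 * U' (inr j) 1 * W k c) := by
  obtain rfl : A = blockDiagTensor A₁ A₂ :=
    hA.trans (funext₃ fun p q k => by rcases p with _ | _ <;> rcases q with _ | _ <;> rfl)
  obtain ⟨h₁₂, h₂₁⟩ := tmul_inl_inr_eq_zero_of_unique hU hW huniq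
  have hbest := le_bestTuckerErr hU hW hmin
  have hS₁ : ((toRows₁ U)ᵀ * toRows₁ U).det = 0 := by
    by_contra h
    exact (hbest.trans_lt hcond1).not_ge (bestTuckerErr_add_fro2_le_of_isUnit_left A₁ A₂ hW h₁₂ h₂₁
      ((isUnit_iff_isUnit_det _).2 (isUnit_iff_ne_zero.2 h)))
  have hS₂ : ((toRows₂ U)ᵀ * toRows₂ U).det = 0 := by
    by_contra h
    exact (hbest.trans_lt hcond2).not_ge (bestTuckerErr_add_fro2_le_of_isUnit_right A₁ A₂ hW h₁₂ h₂₁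
      ((isUnit_iff_isUnit_det _).2 (isUnit_iff_ne_zero.2 h)))
  obtain ⟨Q, hQ, hl, hr⟩ := exists_mem_orthogonalGroup_separating_blocks hU hS₁ hS₂
  refine ⟨Q, hQ, _, rfl, hl, hr, ?_, ?_, ?_, ?_⟩ <;> intro c <;>
    simp only [Fintype.sum_sum_type, blockDiagTensor, Sum.elim_inl, Sum.elim_inr, hl, hr,
      mul_zero, zero_mul, Finset.sum_const_zero, add_zero, zero_add]
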